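/- arXiv:1912.03510 — 5 statements merged into one kernel-verified Lean document; each statement's English description precedes it below -/
import Mathlib

section
/- Let U be a k-periodic word (i.e., U_{i+k} = U_i whenever both sides are defined), let R be any finite word, and define h_R(x) = LCS(R, U_{<x}) for x ≥ 0 and h_R(x) = x for x ≤ 0, where U_{<x} is the x-letter prefix of U. Then the function δ_k h_R defined by δ_k h_R(x) = h_R(x) − h_R(x−k) is monotone non-increasing in x. -/
/-- Length of a longest common subsequence of two words. -/
noncomputable def LCS {α : Type*} (V W : List α) : ℕ :=
  sSup {n | ∃ t : List α, t.length = n ∧ t.Sublist V ∧ t.Sublist W}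

/-!
Write `f W = LCS R W`. For `x ≥ k` the claim says that appending the letter `U[x]` to `U[0, x)`
gains no more than appending it to `U[k, x)`, which by periodicity is `U[0, x - k)`. This is the
Monge inequality `f (P ++ Q ++ Z) + f Q ≤ f (P ++ Q) + f (Q ++ Z)`, proved by induction on `R`:
`LCS (r :: R) W` is the larger of `LCS R W` and `LCS R W₂ + 1`, where `W₂` is what follows the
first `r` in `W`, and each choice of these alternatives on the left-hand side is bounded by an
instance of the inequality for `R`. For `x < k` it suffices that increments of `h_R` are at most
`1` on `x ≥ 0` and equal to `1` on `x < 0`.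
-/

open List

theorem List.drop_take_eq_take_sub_of_periodic {α : Type*} {U : List α} {k m : ℕ}
    (hper : ∀ (i : ℕ) (h : i + k < U.length), U[i + k] = U[i]) (hm : m ≤ U.length) :
    (U.take m).drop k = U.take (m - k) := by
  refine List.ext_getElem (by simp; omega) fun i h₁ _ => ?_
  simp only [List.getElem_drop, List.getElem_take, Nat.add_comm k i]
  exact hper i (by simp only [length_drop, length_take] at h₁; omega)

theorem List.sublist_of_cons_sublist_append_cons {α : Type*} {r : α} {t W₂ : List α} :
    ∀ {W₁ : List α}, r ∉ W₁ → r :: t <+ W₁ ++ r :: W₂ → t <+ W₂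
  | [], _, h => cons_sublist_cons.mp h
  | _ :: _, hr, h => by
    rw [mem_cons, not_or] at hr
    exact sublist_of_cons_sublist_append_cons hr.2 (h.of_cons_of_ne hr.1)

namespace LCS

variable {α : Type*} {R V V' W W' W₁ W₂ t : List α} {r : α}

theorem bddAbove (V W : List α) :
    BddAbove {n | ∃ t : List α, t.length = n ∧ t <+ V ∧ t <+ W} :=
  ⟨V.length, fun _ ⟨_, ht, hV, _⟩ => ht ▸ hV.length_le⟩

theorem exists_sublist (V W : List α) : ∃ t, t.length = LCS V W ∧ t <+ V ∧ t <+ W :=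
  Nat.sSup_mem (s := {n | ∃ t : List α, t.length = n ∧ t <+ V ∧ t <+ W})
    ⟨0, [], rfl, nil_sublist V, nil_sublist W⟩ (bddAbove V W)

theorem length_le (hV : t <+ V) (hW : t <+ W) : t.length ≤ LCS V W :=
  le_csSup (bddAbove V W) ⟨t, rfl, hV, hW⟩

theorem nil_left (W : List α) : LCS [] W = 0 := by
  obtain ⟨t, ht, hV, _⟩ := exists_sublist ([] : List α) W
  rw [← ht, sublist_nil.mp hV, length_nil]

theorem mono (hV : V <+ V') (hW : W <+ W') : LCS V W ≤ LCS V' W' := by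
  obtain ⟨t, ht, htV, htW⟩ := exists_sublist V W
  exact ht ▸ length_le (htV.trans hV) (htW.trans hW)

theorem le_cons_left : LCS R W ≤ LCS (r :: R) W :=
  mono (sublist_cons_self r R) (Sublist.refl W)

theorem append_right_le (V W W' : List α) : LCS V (W ++ W') ≤ LCS V W + W'.length := by
  obtain ⟨t, ht, htV, htW⟩ := exists_sublist V (W ++ W')
  obtain ⟨t₁, t₂, rfl, ht₁, ht₂⟩ := sublist_append_iff.mp htW
  have := length_le ((sublist_append_left t₁ t₂).trans htV) ht₁
  have := ht₂.length_le
  rw [← ht, length_append]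
  omega

theorem cons_of_notMem (hr : r ∉ W) : LCS (r :: R) W = LCS R W := by
  refine le_antisymm ?_ le_cons_left
  obtain ⟨t, ht, htR, htW⟩ := exists_sublist (r :: R) W
  rcases sublist_cons_iff.mp htR with htR | ⟨t', rfl, _⟩
  · exact ht ▸ length_le htR htW
  · exact absurd (htW.subset mem_cons_self) hr

theorem cons_append_cons (hr : r ∉ W₁) :
    LCS (r :: R) (W₁ ++ r :: W₂) = max (LCS R (W₁ ++ r :: W₂)) (LCS R W₂ + 1) := by
  refine le_antisymm ?_ (max_le le_cons_left ?_)
  · obtain ⟨t, ht, htR, htW⟩ := exists_sublist (r :: R) (W₁ ++ r :: W₂)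
    rcases sublist_cons_iff.mp htR with htR | ⟨t', rfl, ht'R⟩
    · exact le_max_of_le_left (ht ▸ length_le htR htW)
    · refine le_max_of_le_right ?_
      rw [← ht, length_cons]
      exact Nat.succ_le_succ (length_le ht'R (sublist_of_cons_sublist_append_cons hr htW))
  · obtain ⟨t, ht, htR, htW⟩ := exists_sublist R W₂
    rw [← ht]
    exact length_le (htR.cons_cons r) ((htW.cons_cons r).trans (sublist_append_right W₁ _))

theorem monge_cons
    (ih : ∀ P Q Z : List α, LCS R (P ++ Q ++ Z) + LCS R Q ≤ LCS R (P ++ Q) + LCS R (Q ++ Z))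
    (P Q Z : List α) :
    LCS (r :: R) (P ++ Q ++ Z) + LCS (r :: R) Q ≤
      LCS (r :: R) (P ++ Q) + LCS (r :: R) (Q ++ Z) := by
  have hPQ : LCS R Q ≤ LCS R (P ++ Q) := mono (Sublist.refl R) (sublist_append_right P Q)
  have hQZ : LCS R (Q ++ Z) ≤ LCS (r :: R) (Q ++ Z) := le_cons_left
  by_cases hP : r ∈ P
  · obtain ⟨P₁, P₂, rfl, hP₁⟩ := eq_append_cons_of_mem hP
    have ePQZ := cons_append_cons (R := R) (W₂ := P₂ ++ Q ++ Z) hP₁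
    have ePQ := cons_append_cons (R := R) (W₂ := P₂ ++ Q) hP₁
    have := ih (P₁ ++ r :: P₂) Q Z
    have := ih P₂ Q Z
    by_cases hQ : r ∈ Q
    · obtain ⟨Q₁, Q₂, rfl, hQ₁⟩ := eq_append_cons_of_mem hQ
      have eQ := cons_append_cons (R := R) (W₂ := Q₂) hQ₁
      have eQZ := cons_append_cons (R := R) (W₂ := Q₂ ++ Z) hQ₁
      have := ih (P₁ ++ r :: P₂ ++ Q₁ ++ [r]) Q₂ Z
      have := ih (P₂ ++ Q₁ ++ [r]) Q₂ Z
      simp only [append_assoc, cons_append, nil_append] at *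
      omega
    · rw [cons_of_notMem hQ]
      simp only [append_assoc, cons_append] at *
      omega
  · by_cases hQ : r ∈ Q
    · obtain ⟨Q₁, Q₂, rfl, hQ₁⟩ := eq_append_cons_of_mem hQ
      have hPQ₁ : r ∉ P ++ Q₁ := by simp [hP, hQ₁]
      have ePQZ := cons_append_cons (R := R) (W₂ := Q₂ ++ Z) hPQ₁
      have ePQ := cons_append_cons (R := R) (W₂ := Q₂) hPQ₁
      have eQ := cons_append_cons (R := R) (W₂ := Q₂) hQ₁
      have eQZ := cons_append_cons (R := R) (W₂ := Q₂ ++ Z) hQ₁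
      have := ih P (Q₁ ++ r :: Q₂) Z
      have := ih (P ++ Q₁ ++ [r]) Q₂ Z
      simp only [append_assoc, cons_append, nil_append] at *
      omega
    · have hPQ' : r ∉ P ++ Q := by simp [hP, hQ]
      rw [cons_of_notMem hQ, cons_of_notMem hPQ']
      have := ih P Q Z
      by_cases hZ : r ∈ Z
      · obtain ⟨Z₁, Z₂, rfl, hZ₁⟩ := eq_append_cons_of_mem hZ
        have ePQZ := cons_append_cons (R := R) (W₁ := P ++ Q ++ Z₁) (W₂ := Z₂)
          (by simp [hP, hQ, hZ₁] : r ∉ P ++ Q ++ Z₁)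
        have eQZ := cons_append_cons (R := R) (W₁ := Q ++ Z₁) (W₂ := Z₂)
          (by simp [hQ, hZ₁] : r ∉ Q ++ Z₁)
        simp only [append_assoc] at *
        omega
      · rw [cons_of_notMem (by simp [hP, hQ, hZ] : r ∉ P ++ Q ++ Z)]
        omega

theorem monge (R P Q Z : List α) :
    LCS R (P ++ Q ++ Z) + LCS R Q ≤ LCS R (P ++ Q) + LCS R (Q ++ Z) := by
  induction R generalizing P Q Z with
  | nil => simp [nil_left]
  | cons r R ih => exact monge_cons ih P Q Z

theorem take_succ_add_take_sub_le (R U : List α) {k m : ℕ}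
    (hper : ∀ (i : ℕ) (h : i + k < U.length), U[i + k] = U[i]) (hkm : k ≤ m) :
    LCS R (U.take (m + 1)) + LCS R (U.take (m - k)) ≤
      LCS R (U.take m) + LCS R (U.take (m + 1 - k)) := by
  rcases lt_or_ge m U.length with hm | hm
  · have hsplit : U.take k ++ (U.take m).drop k = U.take m := by
      conv_rhs => rw [← take_append_drop k (U.take m)]
      rw [take_take, min_eq_left hkm]
    have hsucc : U.take m ++ [U[m]] = U.take (m + 1) := take_concat_get' U m hm
    have hdrop : (U.take m).drop k ++ [U[m]] = (U.take (m + 1)).drop k := by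
      rw [← hsucc, drop_append_of_le_length (by simp; omega)]
    have := monge R (U.take k) ((U.take m).drop k) [U[m]]
    rwa [hsplit, hsucc, hdrop, List.drop_take_eq_take_sub_of_periodic hper hm.le,
      List.drop_take_eq_take_sub_of_periodic hper hm] at this
  · rw [take_of_length_le hm, take_of_length_le (by omega)]
    have := mono (Sublist.refl R) (take_sublist_take_left (l := U) (by omega : m - k ≤ m + 1 - k))
    omega

end LCS

theorem antitone_sub_shift_of_increment_le {g : ℤ → ℤ} {k : ℤ}
    (hg : ∀ n, g (n + 1) - g n ≤ g (n + 1 - k) - g (n - k)) :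
    Antitone fun x => g x - g (x - k) :=
  antitone_int_of_succ_le fun n => by linarith [hg n]

/-- If `U` is `k`-periodic, then `δ_k h_R` is monotone non-increasing. -/
theorem stmt0 {α : Type*} (k : ℕ) (U R : List α)
    (hper : ∀ (i : ℕ) (h : i + k < U.length), U.get ⟨i + k, h⟩ = U.get ⟨i, by omega⟩)
    (h : ℤ → ℤ)
    (hdef : ∀ x : ℤ, (0 ≤ x → h x = (LCS R (U.take x.toNat) : ℤ)) ∧ (x ≤ 0 → h x = x)) :
    Antitone (fun x : ℤ => h x - h (x - k)) := by
  have hnat (m : ℕ) : h m = LCS R (U.take m) := by simpa using (hdef m).1 (by positivity)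
  have hneg (n : ℤ) (hn : n < 0) : h (n + 1) - h n = 1 := by
    rw [(hdef _).2 hn, (hdef _).2 hn.le]; ring
  have hle (n : ℤ) : h (n + 1) - h n ≤ 1 := by
    rcases lt_or_ge n 0 with hn | hn
    · exact (hneg n hn).le
    · lift n to ℕ using hn
      have := LCS.append_right_le R (U.take n) (U[n]?.toList)
      rw [← take_add_one] at this
      have : (U[n]?.toList).length ≤ 1 := by cases U[n]? <;> simp
      rw [← Nat.cast_add_one, hnat, hnat]
      omega
  refine antitone_sub_shift_of_increment_le fun n => ?_
  rcases lt_or_ge (n - k) 0 with hn | hn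
  · rw [show n + 1 - k = n - k + 1 by ring, hneg _ hn]
    exact hle n
  · obtain ⟨m, hm⟩ := Int.eq_ofNat_of_zero_le hn
    obtain rfl : n = ↑(m + k) := by push_cast; omega
    rw [show (↑(m + k) : ℤ) + 1 - k = ↑(m + 1) by push_cast; ring,
      show (↑(m + k) : ℤ) - k = m by push_cast; ring, ← Nat.cast_add_one]
    simp only [hnat]
    have := LCS.take_succ_add_take_sub_le R U (m := m + k) hper (by omega)
    rw [Nat.add_sub_cancel, show m + k + 1 - k = m + 1 by omega] at this
    omega
end

section
/- Let h: ℤ → ℤ be a k-height, i.e., h(x)=x for x ≤ 0, h(x)−h(x−1) ∈ {0,1} for all x, h is eventually constant, and δ_k h(x) := h(x) − h(x−k) is non-increasing. Define the ledges of h as the integers x with δ_k h(x+1) = δ_k h(x) − 1. Then h has exactly k ledges x_1 < x_2 < ⋯ < x_k, all ledges are non-negative, and the ledges are pairwise distinct modulo k. -/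
def IsHeight (h : ℤ → ℤ) : Prop :=
  (∀ x : ℤ, x ≤ 0 → h x = x) ∧
  (∀ x : ℤ, h x - h (x - 1) = 0 ∨ h x - h (x - 1) = 1) ∧
  (∃ N : ℤ, ∀ x : ℤ, N ≤ x → h x = h (x - 1))

def IsKHeight (k : ℕ) (h : ℤ → ℤ) : Prop :=
  IsHeight h ∧ Antitone (fun x : ℤ => h x - h (x - k))

def IsLedge (k : ℕ) (h : ℤ → ℤ) (x : ℤ) : Prop :=
  h (x + 1) - h (x + 1 - k) = h x - h (x - k) - 1

/-- A `k`-height has exactly `k` ledges; they are non-negative and distinct mod `k`. -/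
theorem stmt2 (k : ℕ) (hk : 0 < k) (h : ℤ → ℤ) (hh : IsKHeight k h) :
    ∃ xs : Fin k → ℤ, StrictMono xs ∧ (∀ i, 0 ≤ xs i) ∧
      (∀ i j, i ≠ j → ¬ Int.ModEq (k : ℤ) (xs i) (xs j)) ∧
      (∀ x : ℤ, IsLedge k h x ↔ ∃ i, xs i = x) := by
  classical
  obtain ⟨⟨h0, hstep, N, hN⟩, hanti⟩ := hh
  have hk' : (0:ℤ) < (k:ℤ) := by exact_mod_cast hk
  have s0 : ∀ x : ℤ, 0 ≤ h x - h (x - 1) := by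
    intro x; rcases hstep x with e | e <;> linarith
  have s1 : ∀ x : ℤ, h x - h (x - 1) ≤ 1 := by
    intro x; rcases hstep x with e | e <;> linarith
  have anti1 : ∀ x y : ℤ, x ≤ y → h y - h (y - k) ≤ h x - h (x - k) := by
    intro x y hxy; exact hanti hxy
  -- telescoping bounds : 0 ≤ h x - h (x - n) ≤ n
  have tele : ∀ n : ℕ, ∀ x : ℤ, 0 ≤ h x - h (x - n) ∧ h x - h (x - n) ≤ n := by
    intro n
    induction n with
    | zero => intro x; simp
    | succ m ih =>
      intro x
      have h1 := ih (x - 1)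
      have h2a := s0 x
      have h2b := s1 x
      have e1 : x - 1 - (m:ℤ) = x - ((m:ℕ)+1 : ℕ) := by push_cast; ring
      rw [e1] at h1
      push_cast at h1 ⊢
      constructor <;> linarith [h1.1, h1.2]
  have delta_nonneg : ∀ x : ℤ, 0 ≤ h x - h (x - k) := fun x => (tele k x).1
  have delta_le : ∀ x : ℤ, h x - h (x - k) ≤ k := fun x => (tele k x).2
  -- h is constant from N - 1 on
  have const : ∀ n : ℕ, h (N - 1 + n) = h (N - 1) := by
    intro n
    induction n with
    | zero => simp
    | succ m ih =>
      have := hN (N + m) (by linarith [Int.ofNat_nonneg m])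
      have e1 : N + (m:ℤ) - 1 = N - 1 + m := by ring
      have e2 : N - 1 + ((m:ℕ)+1 : ℕ) = N + m := by push_cast; ring
      rw [e1] at this
      rw [e2, this, ih]
  have large : ∀ x : ℤ, N - 1 ≤ x → h x = h (N - 1) := by
    intro x hx
    have e : x = N - 1 + ((x - (N-1)).toNat : ℤ) := by
      rw [Int.toNat_of_nonneg (by linarith)]; ring
    rw [e]; exact const _
  have dzero : ∀ x : ℤ, N - 1 + k ≤ x → h x - h (x - k) = 0 := by
    intro x hx
    rw [large x (by linarith), large (x - k) (by linarith)]
    ring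
  -- the drop of delta at each step is 0 or 1
  have drop_le : ∀ x : ℤ, h x - h (x - k) ≤ h (x+1) - h (x+1-k) + 1 := by
    intro x
    have a := s1 (x + 1 - k)
    have b := s0 (x + 1)
    have e1 : x + 1 - (k:ℤ) - 1 = x - k := by ring
    have e2 : x + 1 - (1:ℤ) = x := by ring
    rw [e1] at a; rw [e2] at b
    linarith
  -- ledge values of the step function
  have ledge_s : ∀ x : ℤ, IsLedge k h x → (h (x+1) - h x = 0) ∧ (h (x+1-k) - h (x-k) = 1) := by
    intro x hx
    unfold IsLedge at hx
    have a := hstep (x+1)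
    have b := hstep (x+1-(k:ℤ))
    have e1 : x + 1 - (1:ℤ) = x := by ring
    have e2 : x + 1 - (k:ℤ) - 1 = x - k := by ring
    rw [e1] at a; rw [e2] at b
    rcases a with a | a <;> rcases b with b | b <;> constructor <;> linarith
  -- one-step monotonicity of the step function along a residue class
  have s_step : ∀ y : ℤ, h (y + k) - h (y + k - 1) ≤ h y - h (y - 1) := by
    intro y
    have a := anti1 (y + k - 1) (y + k) (by linarith)
    have e1 : y + (k:ℤ) - (k:ℤ) = y := by ring
    have e2 : y + (k:ℤ) - 1 - (k:ℤ) = y - 1 := by ring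
    rw [e1, e2] at a
    linarith
  have smono : ∀ y : ℤ, ∀ n : ℕ, h (y + n * k) - h (y + n * k - 1) ≤ h y - h (y - 1) := by
    intro y n
    induction n with
    | zero => simp
    | succ m ih =>
      have key := s_step (y + m * k)
      have e1 : y + ((m:ℕ)+1 : ℕ) * (k:ℤ) = y + (m:ℤ) * k + k := by push_cast; ring
      push_cast at e1 ⊢
      rw [e1] at *
      linarith [key, ih]
  -- existence of the greatest point where delta is at least k - i
  have key : ∀ i : Fin k, ∃ a : ℤ, ((k:ℤ) - i ≤ h a - h (a - k)) ∧
      ∀ y : ℤ, (k:ℤ) - i ≤ h y - h (y - k) → y ≤ a := by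
    intro i
    have hi : (i:ℤ) < k := by exact_mod_cast i.isLt
    apply Int.exists_greatest_of_bdd
    · refine ⟨N - 1 + k, ?_⟩
      intro z hz
      by_contra hcon
      push_neg at hcon
      have := dzero z (by linarith)
      linarith
    · refine ⟨0, ?_⟩
      have h1 : h 0 = 0 := h0 0 le_rfl
      have h2 : h (0 - (k:ℤ)) = 0 - k := h0 _ (by linarith)
      rw [h1, h2]
      linarith [Int.ofNat_nonneg i.val]
  choose A hA1 hA2 using key
  -- delta values at A i and A i + 1
  have hAlt : ∀ i : Fin k, h (A i + 1) - h (A i + 1 - k) < (k:ℤ) - i := by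
    intro i
    by_contra hcon
    push_neg at hcon
    have := hA2 i (A i + 1) hcon
    linarith
  have hAeq : ∀ i : Fin k, h (A i) - h (A i - k) = (k:ℤ) - i := by
    intro i
    have a := hA1 i
    have b := drop_le (A i)
    have c := hAlt i
    linarith
  have hAeq1 : ∀ i : Fin k, h (A i + 1) - h (A i + 1 - k) = (k:ℤ) - i - 1 := by
    intro i
    have a := hAlt i
    have b := drop_le (A i)
    have c := hAeq i
    linarith
  have hledgeA : ∀ i : Fin k, IsLedge k h (A i) := by
    intro i
    unfold IsLedge
    rw [hAeq i, hAeq1 i]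
  -- strict monotonicity
  have hmono : StrictMono A := by
    intro i j hij
    have hij' : (i:ℤ) < (j:ℤ) := by exact_mod_cast hij
    by_contra hcon
    push_neg at hcon
    have := anti1 (A j) (A i) hcon
    rw [hAeq i, hAeq j] at this
    linarith
  -- nonnegativity
  have hnonneg : ∀ i : Fin k, 0 ≤ A i := by
    intro i
    by_contra hcon
    push_neg at hcon
    have h1 : h (A i + 1) = A i + 1 := h0 _ (by linarith)
    have h2 : h (A i + 1 - k) = A i + 1 - k := h0 _ (by linarith)
    have := hAeq1 i
    rw [h1, h2] at this
    have hi : (0:ℤ) ≤ (i:ℤ) := Int.ofNat_nonneg i.val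
    linarith
  -- distinct mod k
  have hmod : ∀ i j : Fin k, A i < A j → ¬ Int.ModEq (k:ℤ) (A i) (A j) := by
    intro i j hij hm
    have hdvd : (k:ℤ) ∣ A j - A i := Int.ModEq.dvd hm
    obtain ⟨c, hc⟩ := hdvd
    have hc1 : 1 ≤ c := by
      rcases lt_or_ge c 1 with hlt | hle
      · exfalso; nlinarith
      · exact hle
    set n : ℕ := (c - 1).toNat with hn
    have hcn : (n:ℤ) = c - 1 := Int.toNat_of_nonneg (by linarith)
    have li := ledge_s (A i) (hledgeA i)
    have lj := ledge_s (A j) (hledgeA j)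
    have e : A j + 1 - (k:ℤ) = A i + 1 + n * k := by
      rw [hcn]; linarith [hc]
    have sm := smono (A i + 1) n
    rw [← e] at sm
    have e2 : A i + 1 - 1 = A i := by ring
    have e3 : A j + 1 - (k:ℤ) - 1 = A j - k := by ring
    rw [e2, e3] at sm
    linarith [li.1, lj.2, sm]
  -- characterization of ledges
  refine ⟨A, hmono, hnonneg, ?_, ?_⟩
  · intro i j hij hm
    rcases lt_or_gt_of_ne hij with hlt | hgt
    · exact hmod i j (hmono hlt) hm
    · exact hmod j i (hmono hgt) hm.symm
  · intro x
    constructor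
    · intro hx
      have hd1 : 1 ≤ h x - h (x - k) := by
        have a := delta_nonneg (x + 1)
        have b : h (x + 1) - h (x + 1 - k) = h x - h (x - k) - 1 := hx
        linarith
      have hd2 := delta_le x
      refine ⟨⟨((k:ℤ) - (h x - h (x - k))).toNat, ?_⟩, ?_⟩
      · omega
      · set i : Fin k := ⟨((k:ℤ) - (h x - h (x - k))).toNat, by omega⟩ with hi
        have hiv : (i:ℤ) = (k:ℤ) - (h x - h (x - k)) := by
          simp only [hi]
          rw [Int.toNat_of_nonneg (by linarith)]
        have hxle : x ≤ A i := hA2 i x (by rw [hiv]; linarith)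
        have hgele : A i ≤ x := by
          by_contra hcon
          push_neg at hcon
          have h1 := anti1 (x + 1) (A i) (by linarith)
          have h2 : h (x + 1) - h (x + 1 - k) = h x - h (x - k) - 1 := hx
          have h3 := hAeq i
          rw [hiv] at h3
          linarith
        exact le_antisymm hgele hxle
    · rintro ⟨i, rfl⟩
      exact hledgeA i
end

section
/- Let k ≥ 1 and let 0 ≤ x_1 < x_2 < ⋯ < x_k be integers that are pairwise distinct modulo k. Then the function h(x) = x − Σ_{i : x_i ≤ x} ⌈(x − x_i)/k⌉ is the unique k-height whose set of ledges is {x_1, …, x_k}. -/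
/-- The `k`-height with prescribed ledges. -/
noncomputable def heightOf (k : ℕ) (xs : Fin k → ℤ) (x : ℤ) : ℤ :=
  x - ∑ i ∈ Finset.univ.filter (fun i => xs i ≤ x), ⌈((x - xs i : ℚ)) / (k : ℚ)⌉

/-!
Write `δh(x) = h(x) - h(x - k)`. Each term `⌈(x - xᵢ)/k⌉` of `heightOf` grows by exactly one
per `k`-step past `xᵢ`, so `δh(x) = k - #{i | xᵢ < x}`, which drops by one exactly at the `xᵢ`.
A unit step of `heightOf` at `x` loses one for each `xᵢ < x` with `xᵢ ≡ x - 1 [ZMOD k]`: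
distinct residues make this at most one, and past all the `xᵢ` every residue occurs, so the
function becomes constant.

Conversely, for any `k`-height `δh(x + 1) - δh(x)` is a difference of two unit steps, hence in
`{-1, 0}` by antitonicity, and it is `-1` exactly at ledges. As `δh = k` on `x ≤ 0`, the ledges
determine `δh`, and two `k`-heights with the same ledges differ by a `k`-periodic function
vanishing on `x ≤ 0`.
-/

open Finset

section Ramp

variable {k : ℕ}

theorem ceil_intCast_add_mul_div (hk : k ≠ 0) (a q : ℤ) :
    ⌈((a + k * q : ℤ) : ℚ) / k⌉ = ⌈(a : ℚ) / k⌉ + q := by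
  push_cast
  rw [add_div, mul_div_cancel_left₀ _ (Nat.cast_ne_zero.mpr hk), Int.ceil_add_intCast]

theorem ceil_intCast_div_eq_one (hk : 0 < k) {m : ℤ} (h1 : 0 < m) (h2 : m ≤ k) :
    ⌈(m : ℚ) / k⌉ = 1 := by
  have hk0 : (0 : ℚ) < k := by exact_mod_cast hk
  have hle : ⌈(m : ℚ) / k⌉ ≤ 1 :=
    Int.ceil_le.mpr (by rw [Int.cast_one, div_le_one hk0]; exact_mod_cast h2)
  have hpos : 0 < ⌈(m : ℚ) / k⌉ := Int.ceil_pos.mpr (div_pos (by exact_mod_cast h1) hk0)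
  omega

theorem ceil_intCast_div_sub_ceil_pred (hk : 0 < k) (m : ℤ) :
    ⌈(m : ℚ) / k⌉ - ⌈((m - 1 : ℤ) : ℚ) / k⌉ = if (k : ℤ) ∣ m - 1 then 1 else 0 := by
  obtain ⟨r, q, hr0, hrk, rfl⟩ : ∃ r q : ℤ, 0 ≤ r ∧ r < k ∧ m = r + 1 + k * q :=
    ⟨(m - 1) % k, (m - 1) / k, Int.emod_nonneg _ (by omega), Int.emod_lt_of_pos _ (by omega),
      by have := Int.emod_add_mul_ediv (m - 1) k; omega⟩
  rw [show r + 1 + k * q - 1 = r + k * q by ring, ceil_intCast_add_mul_div hk.ne',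
    ceil_intCast_add_mul_div hk.ne', ceil_intCast_div_eq_one hk (by omega) (by omega)]
  simp only [Int.dvd_add_left (dvd_mul_right _ _)]
  rcases hr0.eq_or_lt with rfl | hr
  · simp
  · rw [ceil_intCast_div_eq_one hk hr hrk.le, if_neg (fun hd => ?_)]
    · ring
    · have := Int.le_of_dvd hr hd; omega

noncomputable def ramp (k : ℕ) (m : ℤ) : ℤ := if 0 ≤ m then ⌈(m : ℚ) / k⌉ else 0

theorem ramp_of_nonpos {m : ℤ} (hm : m ≤ 0) : ramp k m = 0 := by
  unfold ramp
  split_ifs with h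
  · simp [le_antisymm hm h]
  · rfl

theorem ramp_sub_ramp_sub_natCast (hk : 0 < k) (m : ℤ) :
    ramp k m - ramp k (m - k) = if 0 < m then 1 else 0 := by
  rcases le_or_gt m 0 with hm | hm
  · rw [ramp_of_nonpos hm, ramp_of_nonpos (by omega), if_neg hm.not_gt, sub_zero]
  rcases le_or_gt m k with hmk | hmk
  · rw [ramp_of_nonpos (m := m - k) (by omega), ramp, if_pos hm.le, if_pos hm,
      ceil_intCast_div_eq_one hk hm hmk, sub_zero]
  · have hsub := ceil_intCast_add_mul_div hk.ne' m (-1)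
    rw [show m + k * -1 = m - k by ring] at hsub
    rw [ramp, ramp, if_pos (by omega), if_pos (by omega), if_pos hm, hsub]
    ring

theorem ramp_sub_ramp_sub_one (hk : 0 < k) (m : ℤ) :
    ramp k m - ramp k (m - 1) = if 0 < m ∧ (k : ℤ) ∣ m - 1 then 1 else 0 := by
  rcases le_or_gt m 0 with hm | hm
  · rw [ramp_of_nonpos hm, ramp_of_nonpos (by omega), if_neg (fun h => hm.not_gt h.1), sub_zero]
  · rw [ramp, ramp, if_pos hm.le, if_pos (by omega), ceil_intCast_div_sub_ceil_pred hk]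
    simp only [hm, true_and]

end Ramp

section Residues

variable {k : ℕ} {xs : Fin k → ℤ}

theorem card_filter_modEq_le_one (hdist : ∀ i j, i ≠ j → ¬ xs i ≡ xs j [ZMOD k])
    (p : Fin k → Prop) [DecidablePred p] (y : ℤ) : #{i | p i ∧ xs i ≡ y [ZMOD k]} ≤ 1 := by
  refine card_le_one.mpr fun i hi j hj => ?_
  simp only [mem_filter, mem_univ, true_and] at hi hj
  by_contra hij
  exact hdist i j hij (hi.2.trans hj.2.symm)

theorem exists_modEq_of_pairwise_not_modEq (hk : 0 < k)
    (hdist : ∀ i j, i ≠ j → ¬ xs i ≡ xs j [ZMOD k]) (y : ℤ) : ∃ i, xs i ≡ y [ZMOD k] := by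
  have : NeZero k := ⟨hk.ne'⟩
  have hinj : Function.Injective fun i => (xs i : ZMod k) := fun i j hij => by
    by_contra hne
    exact hdist i j hne ((ZMod.intCast_eq_intCast_iff _ _ _).mp hij)
  have hbij := (Fintype.bijective_iff_injective_and_card _).mpr ⟨hinj, by simp⟩
  obtain ⟨i, hi⟩ := hbij.2 (y : ZMod k)
  exact ⟨i, (ZMod.intCast_eq_intCast_iff _ _ _).mp hi⟩

end Residues

theorem card_filter_lt_add_one {ι : Type*} [Fintype ι] {f : ι → ℤ} (hf : Function.Injective f)
    (x : ℤ) : #{i | f i < x + 1} = #{i | f i < x} + if ∃ i, f i = x then 1 else 0 := by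
  classical
  split_ifs with h
  · obtain ⟨i, rfl⟩ := h
    have : univ.filter (fun j => f j < f i + 1) = insert i (univ.filter fun j => f j < f i) := by
      ext j
      simp only [mem_filter, mem_univ, true_and, mem_insert, Int.lt_add_one_iff, le_iff_lt_or_eq,
        hf.eq_iff, or_comm]
    rw [this, card_insert_of_notMem (by simp)]
  · push Not at h
    simp only [Int.lt_add_one_iff, le_iff_lt_or_eq, h, or_false, add_zero]

section HeightOf

variable {k : ℕ} {xs : Fin k → ℤ}

theorem heightOf_eq_sub_sum_ramp (x : ℤ) : heightOf k xs x = x - ∑ i, ramp k (x - xs i) := by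
  simp only [heightOf, ramp, sum_filter, sub_nonneg, Int.cast_sub]

theorem heightOf_of_nonpos (hnn : ∀ i, 0 ≤ xs i) {x : ℤ} (hx : x ≤ 0) : heightOf k xs x = x := by
  rw [heightOf_eq_sub_sum_ramp, sum_eq_zero fun i _ => ramp_of_nonpos (by linarith [hnn i]),
    sub_zero]

theorem heightOf_sub_heightOf_sub_natCast (hk : 0 < k) (x : ℤ) :
    heightOf k xs x - heightOf k xs (x - k) = k - #{i | xs i < x} := by
  have hsum : ∑ i, ramp k (x - xs i) - ∑ i, ramp k (x - k - xs i) = #{i | xs i < x} := by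
    simp only [← sum_sub_distrib, sub_right_comm x (k : ℤ), ramp_sub_ramp_sub_natCast hk,
      sub_pos, sum_boole]
  rw [heightOf_eq_sub_sum_ramp, heightOf_eq_sub_sum_ramp]
  linarith

theorem heightOf_sub_heightOf_sub_one (hk : 0 < k) (x : ℤ) :
    heightOf k xs x - heightOf k xs (x - 1) = 1 - #{i | xs i < x ∧ xs i ≡ x - 1 [ZMOD k]} := by
  have hsum : ∑ i, ramp k (x - xs i) - ∑ i, ramp k (x - 1 - xs i) =
      #{i | xs i < x ∧ xs i ≡ x - 1 [ZMOD k]} := by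
    simp only [← sum_sub_distrib, sub_right_comm x 1, ramp_sub_ramp_sub_one hk, sub_pos,
      Int.modEq_iff_dvd, sum_boole]
  rw [heightOf_eq_sub_sum_ramp, heightOf_eq_sub_sum_ramp]
  linarith

theorem isHeight_heightOf (hk : 0 < k) (hnn : ∀ i, 0 ≤ xs i)
    (hdist : ∀ i j, i ≠ j → ¬ xs i ≡ xs j [ZMOD k]) : IsHeight (heightOf k xs) := by
  have hstep := heightOf_sub_heightOf_sub_one (xs := xs) hk
  have hle x := card_filter_modEq_le_one hdist (xs · < x) (x - 1)
  refine ⟨fun x => heightOf_of_nonpos hnn, fun x => ?_, ?_⟩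
  · have := hstep x
    have := hle x
    omega
  obtain ⟨M, hM⟩ := Finite.exists_le xs
  refine ⟨M + 1, fun x hx => ?_⟩
  obtain ⟨i, hi⟩ := exists_modEq_of_pairwise_not_modEq hk hdist (x - 1)
  have hpos : 0 < #{i | xs i < x ∧ xs i ≡ x - 1 [ZMOD k]} :=
    card_pos.mpr ⟨i, by simp [hi, (hM i).trans_lt (show M < x by omega)]⟩
  have := hstep x
  have := hle x
  omega

theorem antitone_heightOf_sub (hk : 0 < k) :
    Antitone fun x => heightOf k xs x - heightOf k xs (x - k) := fun a b hab => by
  simp only [heightOf_sub_heightOf_sub_natCast hk, sub_le_sub_iff_left, Nat.cast_le]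
  exact card_le_card (monotone_filter_right _ fun _ _ h => h.trans_le hab)

theorem isLedge_heightOf_iff (hk : 0 < k) (hinj : Function.Injective xs) (x : ℤ) :
    IsLedge k (heightOf k xs) x ↔ ∃ i, xs i = x := by
  rw [IsLedge, heightOf_sub_heightOf_sub_natCast hk, heightOf_sub_heightOf_sub_natCast hk,
    card_filter_lt_add_one hinj]
  split_ifs with h <;> simp only [h, iff_true, iff_false] <;> push_cast <;> omega

end HeightOf

section Uniqueness

variable {k : ℕ} {g h : ℤ → ℤ}

theorem IsKHeight.sub_sub_add_one_of_not_isLedge (hh : IsKHeight k h) {x : ℤ}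
    (hx : ¬ IsLedge k h x) : h (x + 1) - h (x + 1 - k) = h x - h (x - k) := by
  have hstep := hh.1.2.1 (x + 1)
  have hstep' := hh.1.2.1 (x + 1 - k)
  have hanti : h (x + 1) - h (x + 1 - k) ≤ h x - h (x - k) := hh.2 (Int.le_add_one le_rfl)
  rw [add_sub_cancel_right] at hstep
  rw [sub_right_comm, add_sub_cancel_right] at hstep'
  unfold IsLedge at hx
  omega

theorem IsHeight.sub_sub_natCast_of_nonpos (hh : IsHeight h) {x : ℤ} (hx : x ≤ 0) :
    h x - h (x - k) = k := by
  rw [hh.1 x hx, hh.1 (x - k) (by omega), sub_sub_cancel]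

theorem IsKHeight.sub_sub_eq_of_isLedge_iff (hg : IsKHeight k g) (hh : IsKHeight k h)
    (hl : ∀ x, IsLedge k g x ↔ IsLedge k h x) (x : ℤ) :
    g x - g (x - k) = h x - h (x - k) := by
  obtain hx | hx := le_total x 0
  · rw [hg.1.sub_sub_natCast_of_nonpos hx, hh.1.sub_sub_natCast_of_nonpos hx]
  induction x, hx using Int.leInduction with
  | base => rw [hg.1.sub_sub_natCast_of_nonpos le_rfl, hh.1.sub_sub_natCast_of_nonpos le_rfl]
  | succ n hn ih =>
    by_cases hln : IsLedge k h n
    · have hlg : IsLedge k g n := (hl n).mpr hln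
      unfold IsLedge at hlg hln
      rw [hlg, hln, ih]
    · rw [hg.sub_sub_add_one_of_not_isLedge (mt (hl n).mp hln),
        hh.sub_sub_add_one_of_not_isLedge hln, ih]

theorem IsKHeight.eq_of_isLedge_iff (hk : 0 < k) (hg : IsKHeight k g) (hh : IsKHeight k h)
    (hl : ∀ x, IsLedge k g x ↔ IsLedge k h x) : g = h := by
  have hper : Function.Periodic (g - h) k := fun x => by
    have := hg.sub_sub_eq_of_isLedge_iff hh hl (x + k)
    simp only [Pi.sub_apply, add_sub_cancel_right] at this ⊢
    linarith
  funext x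
  have hx : x - x.toNat • (k : ℤ) ≤ 0 := by
    rw [nsmul_eq_mul]
    have hk1 : (1 : ℤ) ≤ k := Nat.one_le_cast.mpr hk
    nlinarith [Int.self_le_toNat x, Int.natCast_nonneg x.toNat]
  have := hper.sub_nsmul_eq x.toNat (x := x)
  simp only [Pi.sub_apply, hg.1.1 _ hx, hh.1.1 _ hx, sub_self] at this
  linarith

end Uniqueness

theorem stmt3_general (k : ℕ) (hk : 0 < k) (xs : Fin k → ℤ)
    (hnn : ∀ i, 0 ≤ xs i)
    (hdist : ∀ i j, i ≠ j → ¬ Int.ModEq (k : ℤ) (xs i) (xs j)) :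
    IsKHeight k (heightOf k xs) ∧
    (∀ x : ℤ, IsLedge k (heightOf k xs) x ↔ ∃ i, xs i = x) ∧
    (∀ g : ℤ → ℤ, IsKHeight k g → (∀ x : ℤ, IsLedge k g x ↔ ∃ i, xs i = x) →
      g = heightOf k xs) := by
  have hinj : Function.Injective xs := fun i j hij => by
    by_contra hne
    exact hdist i j hne (hij ▸ Int.ModEq.refl _)
  have hheight : IsKHeight k (heightOf k xs) :=
    ⟨isHeight_heightOf hk hnn hdist, antitone_heightOf_sub hk⟩
  refine ⟨hheight, isLedge_heightOf_iff hk hinj, fun g hg hgl => ?_⟩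
  exact hg.eq_of_isLedge_iff hk hheight fun x =>
    (hgl x).trans (isLedge_heightOf_iff hk hinj x).symm

/-- `heightOf k xs` is the unique `k`-height with ledges `x_1 < ⋯ < x_k`. -/
theorem stmt3 (k : ℕ) (hk : 0 < k) (xs : Fin k → ℤ) (hmono : StrictMono xs)
    (hnn : ∀ i, 0 ≤ xs i)
    (hdist : ∀ i j, i ≠ j → ¬ Int.ModEq (k : ℤ) (xs i) (xs j)) :
    IsKHeight k (heightOf k xs) ∧
    (∀ x : ℤ, IsLedge k (heightOf k xs) x ↔ ∃ i, xs i = x) ∧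
    (∀ g : ℤ → ℤ, IsKHeight k g → (∀ x : ℤ, IsLedge k g x ↔ ∃ i, xs i = x) →
      g = heightOf k xs) :=
  stmt3_general k hk xs hnn hdist
end

section
/- Let S^+ be an (m+1)-element subset and S^- an m-element subset of ℤ/kℤ, where 0 ≤ m < k. Then there exists a unique x ∈ ℤ/kℤ such that for every j ∈ {0,1,…,k−1}, the partial sum Σ_{i=x}^{x+j} (1[i ∈ S^+] − 1[i ∈ S^-]) is strictly positive, where the sum is over the cyclic interval from x to x+j. Moreover this x satisfies x ∈ S^+ \ S^-. -/
namespace CycleLemmaAux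

variable {k : ℕ} [NeZero k]

/-- The signed indicator. -/
def F (Sp Sm : Finset (ZMod k)) (i : ZMod k) : ℤ :=
  (if i ∈ Sp then 1 else 0) - (if i ∈ Sm then 1 else 0)

/-- Partial sums of length `n` starting at `x`. -/
def P (Sp Sm : Finset (ZMod k)) (x : ZMod k) (n : ℕ) : ℤ :=
  ∑ i ∈ Finset.range n, F Sp Sm (x + (i : ZMod k))

omit [NeZero k] in
lemma P_add (Sp Sm : Finset (ZMod k)) (x : ZMod k) (a b : ℕ) :
    P Sp Sm x (a + b) = P Sp Sm x a + P Sp Sm (x + (a : ZMod k)) b := by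
  induction b with
  | zero => simp [P]
  | succ b ih =>
      have h1 : a + (b + 1) = (a + b) + 1 := by omega
      rw [h1]
      unfold P at *
      rw [Finset.sum_range_succ, Finset.sum_range_succ, ih]
      push_cast
      ring_nf

lemma P_cycle (Sp Sm : Finset (ZMod k)) (x : ZMod k) :
    P Sp Sm x k = (Sp.card : ℤ) - (Sm.card : ℤ) := by
  have hb : P Sp Sm x k = ∑ y : ZMod k, F Sp Sm y := by
    unfold P
    refine Finset.sum_bij' (fun i _ => x + (i : ZMod k)) (fun y _ => (y - x).val) ?_ ?_ ?_ ?_ ?_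
    · intro i hi; exact Finset.mem_univ _
    · intro y _; exact Finset.mem_range.mpr (ZMod.val_lt _)
    · intro i hi
      have hi' := Finset.mem_range.mp hi
      simp [ZMod.val_cast_of_lt hi']
    · intro y _
      simp [ZMod.natCast_val, ZMod.cast_id]
    · intro i _; rfl
  rw [hb]
  unfold F
  rw [Finset.sum_sub_distrib]
  congr 1 <;> simp [Finset.sum_ite_mem]

end CycleLemmaAux

open CycleLemmaAux in
/-- Cycle lemma: with `|S⁺| = |S⁻| + 1` on a cycle of length `k`, there is a unique
starting point from which all signed partial sums are strictly positive, and that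
starting point lies in `S⁺ \ S⁻`. -/
theorem stmt6 (k m : ℕ) [NeZero k] (hm : m < k)
    (Sp Sm : Finset (ZMod k)) (hSp : Sp.card = m + 1) (hSm : Sm.card = m) :
    (∃! x : ZMod k, ∀ j : ℕ, j < k →
      0 < ∑ i ∈ Finset.range (j + 1),
        (((if (x + (i : ZMod k)) ∈ Sp then 1 else 0) : ℤ) -
          (if (x + (i : ZMod k)) ∈ Sm then 1 else 0))) ∧
    (∀ x : ZMod k, (∀ j : ℕ, j < k →
      0 < ∑ i ∈ Finset.range (j + 1),
        (((if (x + (i : ZMod k)) ∈ Sp then 1 else 0) : ℤ) -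
          (if (x + (i : ZMod k)) ∈ Sm then 1 else 0))) →
      x ∈ Sp ∧ x ∉ Sm) := by
  have hk : 0 < k := Nat.pos_of_ne_zero (NeZero.ne k)
  -- the sums in the statement are `P Sp Sm x (j+1)`
  have hP1 : ∀ x : ZMod k, P Sp Sm x k = 1 := by
    intro x; rw [P_cycle, hSp, hSm]; push_cast; ring
  -- the `good` predicate
  set good : ZMod k → Prop := fun x => ∀ j : ℕ, j < k → 0 < P Sp Sm x (j + 1) with hgood
  -- uniqueness
  have huniq : ∀ x y : ZMod k, good x → good y → x = y := by
    intro x y hx hy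
    by_contra hne
    set a : ℕ := (y - x).val with ha
    have ha0 : a ≠ 0 := by
      simp only [ha, ne_eq, ZMod.val_eq_zero, sub_eq_zero]
      exact fun h => hne h.symm
    have hak : a < k := ZMod.val_lt _
    have hxy : x + (a : ZMod k) = y := by
      rw [ha, ZMod.natCast_val, ZMod.cast_id]; ring
    have hsplit : P Sp Sm x k = P Sp Sm x a + P Sp Sm y (k - a) := by
      have h : a + (k - a) = k := by omega
      have hsplit := P_add Sp Sm x a (k - a)
      rw [h, hxy] at hsplit
      exact hsplit
    have h1 : 0 < P Sp Sm x a := by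
      have := hx (a - 1) (by omega)
      have he : a - 1 + 1 = a := by omega
      rwa [he] at this
    have h2 : 0 < P Sp Sm y (k - a) := by
      have := hy (k - a - 1) (by omega)
      have he : k - a - 1 + 1 = k - a := by omega
      rwa [he] at this
    have := hP1 x
    omega
  -- existence
  set s : ℕ → ℤ := fun n => P Sp Sm 0 n with hs
  obtain ⟨n1, hn1mem, hn1min⟩ :=
    Finset.exists_min_image (Finset.range k) s ⟨0, Finset.mem_range.mpr hk⟩
  set T : Finset ℕ := (Finset.range k).filter (fun n => ∀ m' ∈ Finset.range k, s n ≤ s m') with hT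
  have hTne : T.Nonempty := ⟨n1, Finset.mem_filter.mpr ⟨hn1mem, hn1min⟩⟩
  set n0 : ℕ := T.max' hTne with hn0
  have hn0T : n0 ∈ T := T.max'_mem hTne
  have hn0k : n0 < k := Finset.mem_range.mp (Finset.mem_filter.mp hn0T).1
  have hn0min : ∀ m' ∈ Finset.range k, s n0 ≤ s m' := (Finset.mem_filter.mp hn0T).2
  have hn0last : ∀ n, n0 < n → n < k → s n0 < s n := by
    intro n hlt hnk
    rcases lt_or_eq_of_le (hn0min n (Finset.mem_range.mpr hnk)) with h | h
    · exact h
    · exfalso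
      have hnT : n ∈ T := Finset.mem_filter.mpr
        ⟨Finset.mem_range.mpr hnk, fun m' hm' => h ▸ hn0min m' hm'⟩
      exact absurd (T.le_max' n hnT) (by omega)
  have hx0 : good ((n0 : ZMod k)) := by
    intro j hj
    have hdecomp : s (n0 + (j + 1)) = s n0 + P Sp Sm ((n0 : ZMod k)) (j + 1) := by
      rw [hs]; simp only []
      rw [P_add Sp Sm 0 n0 (j + 1), zero_add]
    by_cases hcase : n0 + (j + 1) < k
    · have := hn0last (n0 + (j + 1)) (by omega) hcase
      omega
    · -- n0 + j + 1 ≥ k, write n0 + j + 1 = k + r with r ≤ n0 < k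
      set r : ℕ := n0 + (j + 1) - k with hr
      have hrk : r ≤ n0 := by omega
      have hsplit2 : s (n0 + (j + 1)) = 1 + s r := by
        have heq : n0 + (j + 1) = k + r := by omega
        rw [hs]; simp only []
        rw [heq, P_add Sp Sm 0 k r, zero_add]
        have hkz : ((k : ℕ) : ZMod k) = 0 := ZMod.natCast_self k
        rw [hkz]
        rw [show P Sp Sm 0 k = 1 from hP1 0]
      have hsr : s n0 ≤ s r := hn0min r (Finset.mem_range.mpr (by omega))
      omega
  refine ⟨⟨(n0 : ZMod k), hx0, fun y hy => huniq y (n0 : ZMod k) hy hx0⟩, ?_⟩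
  intro x hx
  have h0 : 0 < ((if x ∈ Sp then 1 else 0 : ℤ) - (if x ∈ Sm then 1 else 0)) := by
    have h := hx 0 hk
    rw [show (0 : ℕ) + 1 = 1 from rfl, Finset.sum_range_one, Nat.cast_zero, add_zero] at h
    exact h
  constructor
  · by_contra hxp
    rw [if_neg hxp] at h0
    split at h0 <;> omega
  · intro hxm
    rw [if_pos hxm] at h0
    split at h0 <;> omega
end

section
/- If X and Y are centered (possibly degenerate) real Gaussian random variables, possibly dependent, with P(X = Y) < 1, then max{X, Y} is not a Gaussian random variable. -/
/-!
Let `Z = max X Y` have law `N(m, v)`. Since `Z ≥ X`, `Z ≥ Y`, both `X` and `Y` are centered and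
they are not a.s. equal, `m = E Z > 0`. For the right tails,
`P(X ≥ t) ≤ P(Z ≥ t) ≤ P(X ≥ t) + P(Y ≥ t)`. For large `t`, Gaussian tails are ordered
lexicographically by (variance, mean), with ratio tending to infinity: the lower bound forces
`a, b ≤ v`, and then, as `m > 0`, the tail of `N(m, v)` eventually beats three times the tails of
`N(0, a)` and of `N(0, b)`, contradicting the upper bound.
-/

open MeasureTheory ProbabilityTheory Real Filter Set
open scoped NNReal

lemma tendsto_quadratic_atTop {α β γ : ℝ} (h : 0 < α ∨ α = 0 ∧ 0 < β) :
    Tendsto (fun x => α * x ^ 2 + β * x + γ) atTop atTop := by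
  refine tendsto_atTop_add_const_right _ γ ?_
  rcases h with hα | ⟨rfl, hβ⟩
  · have hlin : Tendsto (fun x => α * x + β) atTop atTop :=
      tendsto_atTop_add_const_right _ β (tendsto_id.const_mul_atTop hα)
    refine (hlin.atTop_mul_atTop₀ tendsto_id).congr fun x => ?_
    simp only [id]; ring
  · simpa using tendsto_id.const_mul_atTop hβ

lemma eventually_const_mul_gaussianPDFReal_le (K m₁ m₂ : ℝ) {v₁ v₂ : ℝ≥0}
    (hv₁ : v₁ ≠ 0) (h : v₁ < v₂ ∨ v₁ = v₂ ∧ m₁ < m₂) :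
    ∀ᶠ x in atTop, K * gaussianPDFReal m₁ v₁ x ≤ gaussianPDFReal m₂ v₂ x := by
  have hv₂ : v₂ ≠ 0 :=
    ((pos_iff_ne_zero.2 hv₁).trans_le (h.elim le_of_lt fun h => h.1.le)).ne'
  have h₁ : (0 : ℝ) < v₁ := by positivity
  have h₂ : (0 : ℝ) < v₂ := by positivity
  set α := 1 / (2 * (v₁ : ℝ)) - 1 / (2 * v₂)
  set β := m₂ / (v₂ : ℝ) - m₁ / v₁
  set γ := m₁ ^ 2 / (2 * (v₁ : ℝ)) - m₂ ^ 2 / (2 * v₂)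
  have hquad (x : ℝ) :
      -(x - m₂) ^ 2 / (2 * v₂) = -(x - m₁) ^ 2 / (2 * v₁) + (α * x ^ 2 + β * x + γ) := by
    simp only [α, β, γ]; field_simp; ring
  have hαβ : 0 < α ∨ α = 0 ∧ 0 < β := by
    rcases h with h | ⟨rfl, hm⟩
    · left
      have : 1 / (2 * (v₂ : ℝ)) < 1 / (2 * v₁) := by gcongr
      linarith
    · right
      refine ⟨sub_self _, ?_⟩
      simp only [β, ← sub_div]
      exact div_pos (by linarith) h₁
  set c₁ := (√(2 * π * v₁))⁻¹
  set c₂ := (√(2 * π * v₂))⁻¹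
  have hexp : Tendsto (fun x => c₂ * rexp (α * x ^ 2 + β * x + γ)) atTop atTop :=
    (tendsto_exp_atTop.comp (tendsto_quadratic_atTop hαβ)).const_mul_atTop (by positivity)
  filter_upwards [hexp.eventually_ge_atTop (K * c₁)] with x hx
  rw [gaussianPDFReal, gaussianPDFReal, hquad x, exp_add]
  calc K * (c₁ * rexp (-(x - m₁) ^ 2 / (2 * v₁)))
      = K * c₁ * rexp (-(x - m₁) ^ 2 / (2 * v₁)) := by ring
    _ ≤ c₂ * rexp (α * x ^ 2 + β * x + γ) * rexp (-(x - m₁) ^ 2 / (2 * v₁)) :=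
        mul_le_mul_of_nonneg_right hx (exp_pos _).le
    _ = _ := by ring

lemma gaussianReal_real_apply (m : ℝ) {v : ℝ≥0} (hv : v ≠ 0) (s : Set ℝ) :
    (gaussianReal m v).real s = ∫ x in s, gaussianPDFReal m v x := by
  rw [measureReal_def, gaussianReal_apply_eq_integral _ hv,
    ENNReal.toReal_ofReal (integral_nonneg fun x => gaussianPDFReal_nonneg _ _ _)]

lemma eventually_const_mul_gaussianReal_real_Ici_le (K m₁ m₂ : ℝ) {v₁ v₂ : ℝ≥0}
    (h : v₁ < v₂ ∨ v₁ = v₂ ∧ m₁ < m₂) :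
    ∀ᶠ t in atTop,
      K * (gaussianReal m₁ v₁).real (Ici t) ≤ (gaussianReal m₂ v₂).real (Ici t) := by
  rcases eq_or_ne v₁ 0 with rfl | hv₁
  · filter_upwards [eventually_gt_atTop m₁] with t ht
    simp [gaussianReal_zero_var, measureReal_def, ht.not_ge]
  have hv₂ : v₂ ≠ 0 :=
    ((pos_iff_ne_zero.2 hv₁).trans_le (h.elim le_of_lt fun h => h.1.le)).ne'
  obtain ⟨t₀, hpdf⟩ :=
    eventually_atTop.1 (eventually_const_mul_gaussianPDFReal_le K m₁ m₂ hv₁ h)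
  filter_upwards [eventually_ge_atTop t₀] with t ht
  rw [gaussianReal_real_apply _ hv₁, gaussianReal_real_apply _ hv₂, ← integral_const_mul]
  exact setIntegral_mono_on ((integrable_gaussianPDFReal _ _).const_mul K).integrableOn
    (integrable_gaussianPDFReal _ _).integrableOn measurableSet_Ici
    fun x hx => hpdf x (ht.trans hx)

lemma gaussianReal_real_Ici_pos (m : ℝ) {v : ℝ≥0} (hv : v ≠ 0) (t : ℝ) :
    0 < (gaussianReal m v).real (Ici t) :=
  ENNReal.toReal_pos (fun h0 => by simpa using gaussianReal_absolutelyContinuous' m hv h0)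
    (measure_ne_top _ _)

lemma le_of_forall_gaussianReal_real_Ici_le {m₁ m₂ : ℝ} {v₁ v₂ : ℝ≥0}
    (h : ∀ t, (gaussianReal m₁ v₁).real (Ici t) ≤ (gaussianReal m₂ v₂).real (Ici t)) :
    v₁ ≤ v₂ := by
  by_contra! hlt
  obtain ⟨t, ht⟩ :=
    (eventually_const_mul_gaussianReal_real_Ici_le 2 m₂ m₁ (Or.inl hlt)).exists
  linarith [h t, gaussianReal_real_Ici_pos m₁ (pos_of_gt hlt).ne' t]

lemma exists_gaussianReal_real_Ici_add_lt {m₁ m₂ m : ℝ} {v₁ v₂ v : ℝ≥0}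
    (h₁ : v₁ < v ∨ v₁ = v ∧ m₁ < m) (h₂ : v₂ < v ∨ v₂ = v ∧ m₂ < m) :
    ∃ t, (gaussianReal m₁ v₁).real (Ici t) + (gaussianReal m₂ v₂).real (Ici t) <
      (gaussianReal m v).real (Ici t) := by
  rcases eq_or_ne v 0 with rfl | hv
  · obtain ⟨rfl, hm₁⟩ := h₁.resolve_left not_lt_zero
    obtain ⟨rfl, hm₂⟩ := h₂.resolve_left not_lt_zero
    exact ⟨m, by simp [gaussianReal_zero_var, measureReal_def, hm₁.not_ge, hm₂.not_ge]⟩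
  obtain ⟨t, ht₁, ht₂⟩ := ((eventually_const_mul_gaussianReal_real_Ici_le 3 m₁ m h₁).and
    (eventually_const_mul_gaussianReal_real_Ici_le 3 m₂ m h₂)).exists
  exact ⟨t, by linarith [gaussianReal_real_Ici_pos m hv t]⟩

section RandomVariables

variable {Ω : Type*} [MeasurableSpace Ω] {μ : Measure Ω} {X Y Z : Ω → ℝ}

lemma integral_eq_of_hasLaw_gaussianReal {m : ℝ} {v : ℝ≥0}
    (h : HasLaw X (gaussianReal m v) μ) : ∫ ω, X ω ∂μ = m :=
  h.integral_eq.trans integral_id_gaussianReal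

lemma integral_max_pos_of_not_ae_eq (hX : Integrable X μ) (hY : Integrable Y μ)
    (hX0 : ∫ ω, X ω ∂μ = 0) (hY0 : ∫ ω, Y ω ∂μ = 0) (hXY : ¬ X =ᵐ[μ] Y) :
    0 < ∫ ω, max (X ω) (Y ω) ∂μ := by
  by_contra! hle
  have hZ : Integrable (fun ω => max (X ω) (Y ω)) μ := hX.sup hY
  have ae_eq_max {W : Ω → ℝ} (hW : Integrable W μ) (hW0 : ∫ ω, W ω ∂μ = 0)
      (hWle : ∀ ω, W ω ≤ max (X ω) (Y ω)) : W =ᵐ[μ] fun ω => max (X ω) (Y ω) :=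
    (integral_eq_iff_of_ae_le hW hZ (ae_of_all _ hWle)).1
      (le_antisymm (integral_mono hW hZ hWle) (hW0 ▸ hle))
  exact hXY ((ae_eq_max hX hX0 fun _ => le_max_left _ _).trans
    (ae_eq_max hY hY0 fun _ => le_max_right _ _).symm)

variable [IsFiniteMeasure μ]

lemma map_real_Ici_le_of_le (hX : Measurable X) (hZ : Measurable Z) (h : ∀ ω, X ω ≤ Z ω)
    (t : ℝ) : (μ.map X).real (Ici t) ≤ (μ.map Z).real (Ici t) := by
  rw [map_measureReal_apply hX measurableSet_Ici, map_measureReal_apply hZ measurableSet_Ici]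
  exact measureReal_mono fun ω hω => le_trans hω (h ω)

lemma map_max_real_Ici_le (hX : Measurable X) (hY : Measurable Y) (t : ℝ) :
    (μ.map fun ω => max (X ω) (Y ω)).real (Ici t) ≤
      (μ.map X).real (Ici t) + (μ.map Y).real (Ici t) := by
  rw [map_measureReal_apply (hX.max hY) measurableSet_Ici,
    map_measureReal_apply hX measurableSet_Ici, map_measureReal_apply hY measurableSet_Ici]
  calc μ.real ((fun ω => max (X ω) (Y ω)) ⁻¹' Ici t)
      ≤ μ.real (X ⁻¹' Ici t ∪ Y ⁻¹' Ici t) :=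
        measureReal_mono fun ω (hω : t ≤ max (X ω) (Y ω)) => le_max_iff.1 hω
    _ ≤ μ.real (X ⁻¹' Ici t) + μ.real (Y ⁻¹' Ici t) := measureReal_union_le _ _

end RandomVariables

/-- The maximum of two centered (possibly degenerate, possibly dependent) Gaussians
that are not a.s. equal is not Gaussian. -/
theorem stmt7 {Ω : Type*} [MeasurableSpace Ω] (μ : Measure Ω) [IsProbabilityMeasure μ]
    (X Y : Ω → ℝ) (hX : Measurable X) (hY : Measurable Y) (a b : ℝ≥0)
    (hXg : μ.map X = gaussianReal 0 a) (hYg : μ.map Y = gaussianReal 0 b)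
    (hne : μ {ω | X ω = Y ω} < 1) :
    ¬ ∃ (m : ℝ) (v : ℝ≥0),
      μ.map (fun ω => max (X ω) (Y ω)) = gaussianReal m v := by
  rintro ⟨m, v, hZg⟩
  have hXY : ¬ X =ᵐ[μ] Y := fun h => hne.ne <|
    ((ae_iff_measure_eq (measurableSet_eq_fun hX hY).nullMeasurableSet).1 h).trans measure_univ
  have hXl : HasLaw X (gaussianReal 0 a) μ := ⟨hX.aemeasurable, hXg⟩
  have hYl : HasLaw Y (gaussianReal 0 b) μ := ⟨hY.aemeasurable, hYg⟩
  have hZl : HasLaw (fun ω => max (X ω) (Y ω)) (gaussianReal m v) μ :=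
    ⟨(hX.max hY).aemeasurable, hZg⟩
  have hm : 0 < m := integral_eq_of_hasLaw_gaussianReal hZl ▸ integral_max_pos_of_not_ae_eq
    hXl.hasGaussianLaw.integrable hYl.hasGaussianLaw.integrable
    (integral_eq_of_hasLaw_gaussianReal hXl) (integral_eq_of_hasLaw_gaussianReal hYl) hXY
  have hav : a ≤ v := le_of_forall_gaussianReal_real_Ici_le fun t => by
    simpa only [hXg, hZg] using
      map_real_Ici_le_of_le (μ := μ) hX (hX.max hY) (fun _ => le_max_left _ _) t
  have hbv : b ≤ v := le_of_forall_gaussianReal_real_Ici_le fun t => by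
    simpa only [hYg, hZg] using
      map_real_Ici_le_of_le (μ := μ) hY (hX.max hY) (fun _ => le_max_right _ _) t
  obtain ⟨t, ht⟩ := exists_gaussianReal_real_Ici_add_lt (hav.lt_or_eq.imp_right (⟨·, hm⟩))
    (hbv.lt_or_eq.imp_right (⟨·, hm⟩))
  have hunion := map_max_real_Ici_le (μ := μ) hX hY t
  rw [hXg, hYg, hZg] at hunion
  exact hunion.not_gt ht
end
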